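/- Assume p1, b ∈ (0,1], n1 · p1 > 1, n1 · p1 ≥ log(n1), and n2 · b < 1, and let d0 = log(1/(n2·b)) / log(n1·p1). Then for every integer i with 1 ≤ i ≤ min(d0, n1), the probability that there exists at least one present entry path of length i from u satisfies P(X_i ≥ 1) ≤ 1/(n1 · p1) ≤ 1/log(n1). -/

import Mathlib

open MeasureTheory

/-- The Bernoulli measure on `Bool` with success probability `p` (for `p ∈ [0,1]`). -/
noncomputable def bernoulliMeasure (p : ℝ) : Measure Bool :=
  ENNReal.ofReal p • Measure.dirac true + ENNReal.ofReal (1 - p) • Measure.dirac false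

/-- Sample space: one Boolean indicator for each unordered pair of vertices of the
backward class `V1 = Fin n1`, and one for each pair in `V1 × V2`. -/
abbrev Omega (n1 n2 : ℕ) : Type :=
  (Sym2 (Fin n1) → Bool) × (Fin n1 × Fin n2 → Bool)

/-- Product measure: each within-`V1` edge indicator is Bernoulli(`p1`), each bridge
indicator is Bernoulli(`b`), all independent. -/
noncomputable def graphMeasure (n1 n2 : ℕ) (p1 b : ℝ) : Measure (Omega n1 n2) :=
  (Measure.pi fun _ : Sym2 (Fin n1) => bernoulliMeasure p1).prod
    (Measure.pi fun _ : Fin n1 × Fin n2 => bernoulliMeasure b)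

open scoped Classical in
/-- Entry paths of length `l` from `u`: tuples `(v_1, …, v_l, w)` with
`v_1 = u`, the `v_i ∈ V1` pairwise distinct, and `w ∈ V2`. -/
noncomputable def entryPaths (n1 n2 l : ℕ) (u : Fin n1) :
    Finset ((Fin l → Fin n1) × Fin n2) :=
  Finset.univ.filter fun P => Function.Injective P.1 ∧ ∀ h : 0 < l, P.1 ⟨0, h⟩ = u

/-- An entry path is present in the outcome `ω` if all `l − 1` within-`V1` edges
along it and its final bridge are present. -/
def present (n1 n2 l : ℕ) (P : (Fin l → Fin n1) × Fin n2) (ω : Omega n1 n2) : Prop :=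
  (∀ j : Fin (l - 1),
      ω.1 s(P.1 ⟨j.1, lt_of_lt_of_le j.2 (Nat.sub_le l 1)⟩,
            P.1 ⟨j.1 + 1, Nat.add_lt_of_lt_sub j.2⟩) = true) ∧
  ∀ h : 0 < l, ω.2 (P.1 ⟨l - 1, Nat.sub_lt h Nat.one_pos⟩, P.2) = true

open scoped Classical in
/-- `X_l`: the number of present entry paths of length `l` from `u`, as a real number. -/
noncomputable def pathCount (n1 n2 l : ℕ) (u : Fin n1) (ω : Omega n1 n2) : ℝ :=
  ((entryPaths n1 n2 l u).filter fun P => present n1 n2 l P ω).card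

/-
A union bound over entry paths. An entry path of length `k + 1` is present with probability
`p1 ^ k * b`, and there are at most `n1 ^ k * n2` of them (the first vertex is `u`), so
`P(X_{k+1} ≥ 1) ≤ (n1 p1) ^ k * (n2 b)`. The condition `k + 1 ≤ d0` says exactly that
`(n1 p1) ^ (k + 1) * (n2 b) ≤ 1`, which turns the bound into `1 / (n1 p1)`.
-/

lemma bernoulliMeasure_singleton_true (p : ℝ) : bernoulliMeasure p {true} = ENNReal.ofReal p := by
  simp [bernoulliMeasure]

lemma isProbabilityMeasure_bernoulliMeasure {p : ℝ} (hp0 : 0 ≤ p) (hp1 : p ≤ 1) :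
    IsProbabilityMeasure (bernoulliMeasure p) := by
  constructor
  simp only [bernoulliMeasure, Measure.add_apply, Measure.smul_apply,
    Measure.dirac_apply_of_mem (Set.mem_univ _), smul_eq_mul, mul_one]
  rw [← ENNReal.ofReal_add hp0 (by linarith)]
  norm_num

lemma pi_bernoulliMeasure_setOf_forall_true {ι : Type*} [Fintype ι] {p : ℝ} (hp0 : 0 ≤ p)
    (hp1 : p ≤ 1) (S : Finset ι) :
    Measure.pi (fun _ : ι => bernoulliMeasure p) {f | ∀ j ∈ S, f j = true}
      = ENNReal.ofReal p ^ S.card := by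
  have := isProbabilityMeasure_bernoulliMeasure hp0 hp1
  have hS : {f : ι → Bool | ∀ j ∈ S, f j = true} = (S : Set ι).pi fun _ => {true} := by
    ext f; simp
  rw [hS, Measure.pi_pi_finset, Finset.prod_const, bernoulliMeasure_singleton_true]

def pathEdges {α : Type*} {l : ℕ} (v : Fin l → α) (j : Fin (l - 1)) : Sym2 α :=
  s(v ⟨j, lt_of_lt_of_le j.2 (Nat.sub_le l 1)⟩, v ⟨j + 1, Nat.add_lt_of_lt_sub j.2⟩)

lemma pathEdges_injective {α : Type*} {l : ℕ} {v : Fin l → α} (hv : Function.Injective v) :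
    Function.Injective (pathEdges v) := by
  intro j k hjk
  rcases Sym2.eq_iff.mp hjk with ⟨h, -⟩ | ⟨h, h'⟩
  · simpa [Fin.ext_iff] using hv h
  · have := Fin.mk.inj (hv h)
    have := Fin.mk.inj (hv h')
    omega

lemma graphMeasure_present {n1 n2 k : ℕ} {p1 b : ℝ} (hp0 : 0 ≤ p1) (hp1 : p1 ≤ 1)
    (hb0 : 0 ≤ b) (hb1 : b ≤ 1) {P : (Fin (k + 1) → Fin n1) × Fin n2}
    (hP : Function.Injective P.1) :
    graphMeasure n1 n2 p1 b {ω | present n1 n2 (k + 1) P ω}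
      = ENNReal.ofReal p1 ^ k * ENNReal.ofReal b := by
  have := isProbabilityMeasure_bernoulliMeasure hb0 hb1
  have hset : {ω | present n1 n2 (k + 1) P ω}
      = {f | ∀ e ∈ Finset.univ.image (pathEdges P.1), f e = true} ×ˢ
        {g | ∀ r ∈ ({(P.1 (Fin.last k), P.2)} : Finset _), g r = true} := by
    ext ω
    simp [present, pathEdges, Fin.last]
  rw [hset, graphMeasure, Measure.prod_prod, pi_bernoulliMeasure_setOf_forall_true hp0 hp1,
    pi_bernoulliMeasure_setOf_forall_true hb0 hb1,
    Finset.card_image_of_injective _ (pathEdges_injective hP)]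
  simp

lemma card_entryPaths_le (n1 n2 k : ℕ) (u : Fin n1) :
    (entryPaths n1 n2 (k + 1) u).card ≤ n1 ^ k * n2 := by
  have hinj : Set.InjOn (fun P : (Fin (k + 1) → Fin n1) × Fin n2 => (Fin.tail P.1, P.2))
      (entryPaths n1 n2 (k + 1) u) := by
    intro P hP Q hQ hPQ
    simp only [entryPaths, Finset.coe_filter, Finset.mem_univ, true_and, Set.mem_ofPred_eq]
      at hP hQ
    obtain ⟨htail, hw⟩ := Prod.ext_iff.mp hPQ
    refine Prod.ext ?_ hw
    rw [← Fin.cons_self_tail P.1, ← Fin.cons_self_tail Q.1]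
    exact congrArg₂ _ ((hP.2 k.succ_pos).trans (hQ.2 k.succ_pos).symm) htail
  simpa using Finset.card_le_card_of_injOn _ (fun _ _ => Finset.mem_coe.mpr (Finset.mem_univ _))
    hinj

lemma setOf_one_le_pathCount_subset (n1 n2 l : ℕ) (u : Fin n1) :
    {ω | 1 ≤ pathCount n1 n2 l u ω} ⊆
      ⋃ P ∈ entryPaths n1 n2 l u, {ω | present n1 n2 l P ω} := by
  classical
  rintro ω (hω : 1 ≤ pathCount n1 n2 l u ω)
  unfold pathCount at hω
  obtain ⟨P, hP⟩ := Finset.card_pos.mp (Nat.one_le_cast.mp hω)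
  rw [Finset.mem_filter] at hP
  exact Set.mem_biUnion hP.1 hP.2

lemma graphMeasure_one_le_pathCount_le {n1 n2 : ℕ} {p1 b : ℝ} (hp0 : 0 ≤ p1) (hp1 : p1 ≤ 1)
    (hb0 : 0 ≤ b) (hb1 : b ≤ 1) (k : ℕ) (u : Fin n1) :
    graphMeasure n1 n2 p1 b {ω | 1 ≤ pathCount n1 n2 (k + 1) u ω}
      ≤ ENNReal.ofReal (((n1 : ℝ) * p1) ^ k * ((n2 : ℝ) * b)) := by
  calc graphMeasure n1 n2 p1 b {ω | 1 ≤ pathCount n1 n2 (k + 1) u ω}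
      ≤ ∑ P ∈ entryPaths n1 n2 (k + 1) u,
          graphMeasure n1 n2 p1 b {ω | present n1 n2 (k + 1) P ω} :=
        (measure_mono (setOf_one_le_pathCount_subset n1 n2 (k + 1) u)).trans
          (measure_biUnion_finset_le _ _)
    _ = (entryPaths n1 n2 (k + 1) u).card * (ENNReal.ofReal p1 ^ k * ENNReal.ofReal b) := by
        rw [Finset.sum_congr rfl fun P hP => graphMeasure_present hp0 hp1 hb0 hb1
          (Finset.mem_filter.mp hP).2.1, Finset.sum_const, nsmul_eq_mul]
    _ ≤ (n1 ^ k * n2 : ℕ) * (ENNReal.ofReal p1 ^ k * ENNReal.ofReal b) := by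
        gcongr
        exact card_entryPaths_le n1 n2 k u
    _ = ENNReal.ofReal (((n1 : ℝ) * p1) ^ k * ((n2 : ℝ) * b)) := by
        rw [ENNReal.ofReal_mul (by positivity), ENNReal.ofReal_pow (by positivity),
          ENNReal.ofReal_mul (by positivity), ENNReal.ofReal_mul (by positivity),
          ENNReal.ofReal_natCast, ENNReal.ofReal_natCast]
        push_cast
        ring

lemma pow_mul_le_one_of_mul_log_le {x y : ℝ} (hx : 0 < x) {n : ℕ}
    (h : n * Real.log x ≤ Real.log (1 / y)) : x ^ n * y ≤ 1 := by
  rcases le_or_gt y 0 with hy | hy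
  · exact (mul_nonpos_of_nonneg_of_nonpos (by positivity) hy).trans zero_le_one
  rw [← Real.log_pow, Real.log_le_log_iff (by positivity) (by positivity)] at h
  rwa [le_div_iff₀ hy] at h

theorem stmt11_general (n1 n2 : ℕ) (u : Fin n1)
    (p1 b : ℝ) (hp0 : 0 < p1) (hp1 : p1 ≤ 1) (hb0 : 0 < b) (hb1 : b ≤ 1)
    (hnp : 1 < (n1 : ℝ) * p1) (hnplog : Real.log n1 ≤ (n1 : ℝ) * p1)
    (d0 : ℝ) (hd0 : d0 = Real.log (1 / ((n2 : ℝ) * b)) / Real.log ((n1 : ℝ) * p1))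
    (i : ℕ) (hi1 : 1 ≤ i) (hid0 : (i : ℝ) ≤ d0) :
    graphMeasure n1 n2 p1 b {ω | 1 ≤ pathCount n1 n2 i u ω} ≤
        ENNReal.ofReal (1 / ((n1 : ℝ) * p1)) ∧
      1 / ((n1 : ℝ) * p1) ≤ 1 / Real.log n1 := by
  obtain ⟨k, rfl⟩ := Nat.exists_eq_add_of_le' hi1
  have hx : 0 < (n1 : ℝ) * p1 := one_pos.trans hnp
  have hpow : ((n1 : ℝ) * p1) ^ (k + 1) * ((n2 : ℝ) * b) ≤ 1 := by
    rw [hd0, le_div_iff₀ (Real.log_pos hnp)] at hid0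
    exact pow_mul_le_one_of_mul_log_le hx hid0
  refine ⟨(graphMeasure_one_le_pathCount_le hp0.le hp1 hb0.le hb1 k u).trans ?_, ?_⟩
  · refine ENNReal.ofReal_le_ofReal ?_
    rw [le_div_iff₀ hx]
    calc ((n1 : ℝ) * p1) ^ k * ((n2 : ℝ) * b) * ((n1 : ℝ) * p1)
        = ((n1 : ℝ) * p1) ^ (k + 1) * ((n2 : ℝ) * b) := by ring
      _ ≤ 1 := hpow
  · have hn1 : (1 : ℝ) < n1 := hnp.trans_le (mul_le_of_le_one_right n1.cast_nonneg hp1)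
    exact one_div_le_one_div_of_le (Real.log_pos hn1) hnplog

/-- **Theorem 2 (paper).** If `n1·p1 > 1`, `n1·p1 ≥ log n1` and `n2·b < 1`, then with
`d0 = log(1/(n2·b)) / log(n1·p1)`, for every `1 ≤ i ≤ min(d0, n1)` we have
`P(X_i ≥ 1) ≤ 1/(n1·p1) ≤ 1/log n1`. -/
theorem stmt11 (n1 n2 : ℕ) (hn1 : 0 < n1) (hn2 : 0 < n2) (u : Fin n1)
    (p1 b : ℝ) (hp0 : 0 < p1) (hp1 : p1 ≤ 1) (hb0 : 0 < b) (hb1 : b ≤ 1)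
    (hnp : 1 < (n1 : ℝ) * p1) (hnplog : Real.log n1 ≤ (n1 : ℝ) * p1)
    (hnb : (n2 : ℝ) * b < 1)
    (d0 : ℝ) (hd0 : d0 = Real.log (1 / ((n2 : ℝ) * b)) / Real.log ((n1 : ℝ) * p1))
    (i : ℕ) (hi1 : 1 ≤ i) (hid0 : (i : ℝ) ≤ d0) (hin : i ≤ n1) :
    graphMeasure n1 n2 p1 b {ω | 1 ≤ pathCount n1 n2 i u ω} ≤
        ENNReal.ofReal (1 / ((n1 : ℝ) * p1)) ∧
      1 / ((n1 : ℝ) * p1) ≤ 1 / Real.log n1 :=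
  stmt11_general n1 n2 u p1 b hp0 hp1 hb0 hb1 hnp hnplog d0 hd0 i hi1 hid0
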